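/- If 0 < p < 1, then among all trees on n ≥ 2 vertices, S_p(T) = Σ_v deg(v)^p is minimized by the star K_{1,n-1}; if p > 1, it is maximized by the star. -/

import Mathlib

/-!
Every degree `d` of a tree on `n ≥ 3` vertices lies in `[1, n - 1]`, and the degrees sum to
`2 (n - 1)`. For convex `f`, the chord through `(1, f 1)` and `(n - 1, f (n - 1))` bounds
`f d` by an affine function of `d`; summing it over the vertices, the total `2 (n - 1)` makes the
bound exactly `f (n - 1) + (n - 1) f 1`, the value attained by the star. Concave `f` follows by
negation; for `n ≤ 2` every tree has all degrees equal to `n - 1`.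
-/

open scoped Classical
open Finset SimpleGraph

def starGraph (n : ℕ) : SimpleGraph (Fin n) :=
  SimpleGraph.fromRel (fun a _ => (a : ℕ) = 0)

/-- S_p(T) = Σ_v deg(v)^p for real p. -/
noncomputable def Sp {n : ℕ} (T : SimpleGraph (Fin n)) (p : ℝ) : ℝ :=
  ∑ v : Fin n, (T.degree v : ℝ) ^ p

theorem ConvexOn.sub_mul_le_of_mem_Icc {s : Set ℝ} {f : ℝ → ℝ} (hf : ConvexOn ℝ s f)
    {x y z : ℝ} (hx : x ∈ s) (hz : z ∈ s) (hy : y ∈ Set.Icc x z) :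
    (z - x) * f y ≤ (z - y) * f x + (y - x) * f z := by
  obtain ⟨hxy, hyz⟩ := hy
  rcases hxy.eq_or_lt with rfl | hxy
  · linarith
  rcases hyz.eq_or_lt with rfl | hyz
  · linarith
  exact hf.secant_mono_aux1 hx hz hxy hyz

theorem ConvexOn.sub_mul_sum_le {ι : Type*} [Fintype ι] {s : Set ℝ} {f : ℝ → ℝ}
    (hf : ConvexOn ℝ s f) {a b : ℝ} (ha : a ∈ s) (hb : b ∈ s) {d : ι → ℝ}
    (hd : ∀ i, d i ∈ Set.Icc a b) :
    (b - a) * ∑ i, f (d i) ≤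
      (Fintype.card ι * b - ∑ i, d i) * f a + (∑ i, d i - Fintype.card ι * a) * f b := by
  calc (b - a) * ∑ i, f (d i)
      ≤ ∑ i, ((b - d i) * f a + (d i - a) * f b) := by
        rw [Finset.mul_sum]
        exact Finset.sum_le_sum fun i _ ↦ hf.sub_mul_le_of_mem_Icc ha hb (hd i)
    _ = _ := by
        simp only [Finset.sum_add_distrib, ← Finset.sum_mul, Finset.sum_sub_distrib,
          Finset.sum_const, Finset.card_univ, nsmul_eq_mul]

namespace SimpleGraph

variable {V : Type*} [Fintype V] {G : SimpleGraph V} [DecidableRel G.Adj]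

theorem IsTree.sum_degrees_eq_twice_card_sub_one (hG : G.IsTree) :
    ∑ v, G.degree v = 2 * (Fintype.card V - 1) := by
  rw [sum_degrees_eq_twice_card_edges, ← hG.card_edgeFinset, Nat.add_sub_cancel]

theorem IsTree.degree_mem_Icc [Nontrivial V] (hG : G.IsTree) (v : V) :
    (G.degree v : ℝ) ∈ Set.Icc 1 (Fintype.card V - 1 : ℝ) := by
  have hpos := hG.connected.preconnected.degree_pos_of_nontrivial v
  have hlt := G.degree_lt_card_verts v
  constructor
  · exact_mod_cast hpos
  · rw [le_sub_iff_add_le]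
    exact_mod_cast hlt

theorem IsTree.degree_eq_card_sub_one_of_card_le_two (hG : G.IsTree)
    (hcard : Fintype.card V ≤ 2) (v : V) : G.degree v = Fintype.card V - 1 := by
  have hlt := G.degree_lt_card_verts v
  rcases Nat.lt_or_ge 1 (Fintype.card V) with h2 | h1
  · have := Fintype.one_lt_card_iff_nontrivial.mp h2
    have := hG.connected.preconnected.degree_pos_of_nontrivial v
    omega
  · omega

theorem IsTree.sum_comp_degree_le_of_convexOn (hG : G.IsTree) {f : ℝ → ℝ}
    (hf : ConvexOn ℝ (Set.Icc 1 (Fintype.card V - 1 : ℝ)) f) :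
    ∑ v, f (G.degree v) ≤ f (Fintype.card V - 1) + (Fintype.card V - 1) * f 1 := by
  have hpos : 0 < Fintype.card V := Fintype.card_pos_iff.2 hG.connected.nonempty
  rcases le_or_gt (Fintype.card V) 2 with hsmall | hlarge
  · have hdeg (v : V) : (G.degree v : ℝ) = (Fintype.card V - 1 : ℕ) := by
      rw [hG.degree_eq_card_sub_one_of_card_le_two hsmall v]
    simp only [hdeg, Finset.sum_const, Finset.card_univ, nsmul_eq_mul]
    interval_cases h : Fintype.card V <;> norm_num [h]
    linarith
  have := Fintype.one_lt_card_iff_nontrivial (α := V) |>.mp (by omega)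
  have hsum : ∑ v, (G.degree v : ℝ) = 2 * (Fintype.card V - 1) := by
    rw [← Nat.cast_sum, hG.sum_degrees_eq_twice_card_sub_one, Nat.cast_mul,
      Nat.cast_sub hpos]
    norm_num
  have h3 : (3 : ℝ) ≤ Fintype.card V := by exact_mod_cast hlarge
  have hIcc : (1 : ℝ) ≤ Fintype.card V - 1 := by linarith
  have hchord := hf.sub_mul_sum_le (Set.left_mem_Icc.2 hIcc) (Set.right_mem_Icc.2 hIcc)
    hG.degree_mem_Icc
  rw [hsum] at hchord
  refine le_of_mul_le_mul_left (a := (Fintype.card V : ℝ) - 2) ?_ (by linarith)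
  linear_combination hchord

theorem IsTree.le_sum_comp_degree_of_concaveOn (hG : G.IsTree) {f : ℝ → ℝ}
    (hf : ConcaveOn ℝ (Set.Icc 1 (Fintype.card V - 1 : ℝ)) f) :
    f (Fintype.card V - 1) + (Fintype.card V - 1) * f 1 ≤ ∑ v, f (G.degree v) := by
  have := hG.sum_comp_degree_le_of_convexOn hf.neg
  simp only [Pi.neg_apply, Finset.sum_neg_distrib] at this
  linarith

end SimpleGraph

theorem starGraph_eq_starGraph_zero (n : ℕ) [NeZero n] :
    _root_.starGraph n = SimpleGraph.starGraph 0 := by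
  ext a b
  simp [_root_.starGraph, SimpleGraph.starGraph, Fin.val_eq_zero_iff]

theorem sum_comp_degree_starGraph {n : ℕ} [NeZero n] (f : ℝ → ℝ) :
    ∑ v, f ((_root_.starGraph n).degree v) = f (n - 1) + (n - 1) * f 1 := by
  have hdeg (v : Fin n) : (_root_.starGraph n).degree v = if v = 0 then n - 1 else 1 := by
    rw [starGraph_eq_starGraph_zero]
    split_ifs with hv
    · subst hv
      convert degree_starGraph_center (r := (0 : Fin n))
      simp
    · convert degree_starGraph_of_ne_center hv
  rw [Fintype.sum_eq_add_sum_compl 0, Finset.sum_congr rfl fun v hv ↦ by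
    rw [hdeg, if_neg (Finset.mem_compl.1 hv ∘ Finset.mem_singleton.2)]]
  simp [hdeg, Finset.card_compl, NeZero.one_le]

theorem star_extremal_Sp_general (n : ℕ) (p : ℝ) (T : SimpleGraph (Fin n))
    (hT : T.IsTree) :
    (0 < p → p < 1 → Sp (starGraph n) p ≤ Sp T p) ∧
      (1 < p → Sp T p ≤ Sp (starGraph n) p) := by
  have : NeZero n := ⟨Fin.pos_iff_nonempty.2 hT.connected.nonempty |>.ne'⟩
  have hIcc (b : ℝ) : Set.Icc 1 b ⊆ Set.Ici 0 := fun x hx ↦ zero_le_one.trans hx.1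
  have hstar : Sp (starGraph n) p = (n - 1) ^ p + (n - 1) := by
    simpa [Sp] using sum_comp_degree_starGraph (· ^ p)
  refine ⟨fun hp0 hp1 ↦ ?_, fun hp1 ↦ ?_⟩
  · have := hT.le_sum_comp_degree_of_concaveOn
      ((Real.concaveOn_rpow hp0.le hp1.le).subset (hIcc _) (convex_Icc _ _))
    rw [hstar]
    simpa [Sp] using this
  · have := hT.sum_comp_degree_le_of_convexOn
      ((convexOn_rpow hp1.le).subset (hIcc _) (convex_Icc _ _))
    rw [hstar]
    simpa [Sp] using this

/-- For 0 < p < 1 the star minimizes S_p among trees on n ≥ 2 vertices;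
for p > 1 it maximizes S_p. -/
theorem star_extremal_Sp (n : ℕ) (hn : 2 ≤ n) (p : ℝ) (T : SimpleGraph (Fin n))
    (hT : T.IsTree) :
    (0 < p → p < 1 → Sp (starGraph n) p ≤ Sp T p) ∧
      (1 < p → Sp T p ≤ Sp (starGraph n) p) :=
  star_extremal_Sp_general n p T hT
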